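/- arXiv:1403.8083 — 3 statements merged into one kernel-verified Lean document; each statement's English description precedes it below -/
import Mathlib

section
/- For any complex sequence x with ∑ |x_k x_{k+1}| < ∞, the series defining 𝔉(x) = 1 + ∑_{m=1}^∞ (-1)^m ∑_{k_1≥1} ∑_{k_2≥k_1+2} … ∑_{k_m≥k_{m-1}+2} x_{k_1}x_{k_1+1}⋯x_{k_m}x_{k_m+1} converges absolutely and satisfies |𝔉(x)| ≤ exp(∑_{k=1}^∞ |x_k x_{k+1}|). -/
/-!
With `a n = |x_{n+1} x_{n+2}|`, the absolute value of the level-`m` term is `∏ a (k_i - 1)` and the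
shifted indices `k_i - 1` are strictly increasing. Composing strictly increasing tuples with the
`m!` permutations of `Fin m` embeds them injectively into `ℕ^m`, whose sum of `∏ a (t_i)` is
`(∑ a)^m`; so level `m` contributes at most `(∑ a)^m / m!`, and summing over `m` gives
`exp (∑ a)`. Working in `ℝ≥0∞` lets all these rearrangements be done before summability is known.
-/

open scoped BigOperators

/-- Admissible index tuples: k₁ ≥ 1 and k_{i+1} ≥ k_i + 2. -/
def FAdm (m : ℕ) (k : Fin m → ℕ) : Prop :=
  (∀ i, 1 ≤ k i) ∧ ∀ i j : Fin m, (i : ℕ) + 1 = (j : ℕ) → k i + 2 ≤ k j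

/-- The function 𝔉 defined by the alternating multiple series
`𝔉(x) = 1 + ∑_{m≥1} (-1)^m ∑_{k₁≥1, k_{i+1}≥k_i+2} x_{k₁}x_{k₁+1}⋯x_{k_m}x_{k_m+1}`
(the term `m = 0` contributes the leading `1`). The sequence `x` is indexed so that
`x k` is `x_k` for `k ≥ 1`. -/
noncomputable def Fcal (x : ℕ → ℂ) : ℂ :=
  ∑' p : (Σ m : ℕ, { k : Fin m → ℕ // FAdm m k }),
    (-1 : ℂ) ^ p.1 * ∏ i, x (p.2.1 i) * x (p.2.1 i + 1)

open scoped ENNReal NNReal Nat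

namespace ENNReal

variable {ι : Type*}

theorem tsum_fin_pi_prod (A : ι → ℝ≥0∞) (m : ℕ) :
    ∑' t : Fin m → ι, ∏ i, A (t i) = (∑' n, A n) ^ m := by
  induction m with
  | zero => simp
  | succ m ih =>
    let e := Fin.consEquiv fun _ : Fin (m + 1) => ι
    calc ∑' t : Fin (m + 1) → ι, ∏ i, A (t i)
        = ∑' q : ι × (Fin m → ι), ∏ i, A (e q i) := (e.tsum_eq _).symm
      _ = ∑' q : ι × (Fin m → ι), A q.1 * ∏ i, A (q.2 i) := by
          simp [e, Fin.consEquiv, Fin.prod_univ_succ]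
      _ = (∑' n, A n) ^ (m + 1) := by
          simp_rw [ENNReal.tsum_prod', ENNReal.tsum_mul_left, ih, ENNReal.tsum_mul_right,
            pow_succ, mul_comm]

theorem factorial_mul_tsum_strictMono_prod_le [LinearOrder ι] (A : ι → ℝ≥0∞) (m : ℕ) :
    m ! * ∑' k : { k : Fin m → ι // StrictMono k }, ∏ i, A (k.1 i)
      ≤ ∑' t : Fin m → ι, ∏ i, A (t i) := by
  let rearrange : Equiv.Perm (Fin m) × { k : Fin m → ι // StrictMono k } → (Fin m → ι) :=
    fun q => q.2.1 ∘ q.1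
  have hinj : Function.Injective rearrange := by
    rintro ⟨σ, k, hk⟩ ⟨τ, l, hl⟩ h
    have hkl : k = l := (hk.range_inj hl).1 <| by
      simpa [rearrange, Set.range_comp, σ.surjective.range_eq, τ.surjective.range_eq] using
        congrArg Set.range h
    subst hkl
    have hστ : σ = τ := Equiv.ext fun i => hk.injective (congrFun h i)
    simp [hστ]
  have hperm (σ : Equiv.Perm (Fin m)) (k : { k : Fin m → ι // StrictMono k }) :
      ∏ i, A (rearrange (σ, k) i) = ∏ i, A (k.1 i) :=
    Equiv.prod_comp σ fun i => A (k.1 i)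
  calc m ! * ∑' k : { k : Fin m → ι // StrictMono k }, ∏ i, A (k.1 i)
      = ∑' (σ : Equiv.Perm (Fin m)) (k : { k : Fin m → ι // StrictMono k }),
          ∏ i, A (rearrange (σ, k) i) := by
        simp [hperm, tsum_fintype, Fintype.card_perm]
    _ = ∑' q, ∏ i, A (rearrange q i) :=
        (ENNReal.tsum_prod' (f := fun q => ∏ i, A (rearrange q i))).symm
    _ ≤ ∑' t : Fin m → ι, ∏ i, A (t i) :=
        ENNReal.tsum_comp_le_tsum_of_injective hinj fun t => ∏ i, A (t i)

theorem tsum_strictMono_prod_le [LinearOrder ι] (A : ι → ℝ≥0∞) (m : ℕ) :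
    ∑' k : { k : Fin m → ι // StrictMono k }, ∏ i, A (k.1 i) ≤ (∑' n, A n) ^ m / m ! := by
  rw [ENNReal.le_div_iff_mul_le (Or.inl (by positivity)) (Or.inl (by simp)), mul_comm,
    ← tsum_fin_pi_prod]
  exact factorial_mul_tsum_strictMono_prod_le A m

theorem tsum_pow_div_factorial (r : ℝ≥0) :
    ∑' m : ℕ, (r : ℝ≥0∞) ^ m / m ! = ENNReal.ofReal (Real.exp r) := by
  have hterm (m : ℕ) : (r : ℝ≥0∞) ^ m / m ! = ENNReal.ofReal ((r : ℝ) ^ m / m !) := by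
    rw [ENNReal.ofReal_div_of_pos (by positivity), ENNReal.ofReal_pow r.coe_nonneg,
      ENNReal.ofReal_coe_nnreal, ENNReal.ofReal_natCast]
  rw [tsum_congr hterm, ← ENNReal.ofReal_tsum_of_nonneg (fun m => by positivity)
    (Real.summable_pow_div_factorial r), Real.exp_eq_exp_ℝ,
    (NormedSpace.expSeries_div_hasSum_exp (r : ℝ)).tsum_eq]

end ENNReal

theorem NNReal.summable_coe_and_tsum_le_of_tsum_le {α : Type*} {f : α → ℝ≥0} {b : ℝ}
    (hb : 0 ≤ b) (h : ∑' p, (f p : ℝ≥0∞) ≤ ENNReal.ofReal b) :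
    Summable (fun p => (f p : ℝ)) ∧ ∑' p, (f p : ℝ) ≤ b := by
  have hf : Summable f :=
    ENNReal.tsum_coe_ne_top_iff_summable.1 (ne_top_of_le_ne_top ENNReal.ofReal_ne_top h)
  refine ⟨NNReal.summable_coe.2 hf, ?_⟩
  rw [← ENNReal.coe_tsum hf] at h
  exact NNReal.coe_tsum (f := f) ▸ ENNReal.toReal_le_of_le_ofReal hb h

namespace FAdm

variable {m : ℕ} {k : Fin m → ℕ}

theorem strictMono_pred (hk : FAdm m k) : StrictMono fun i => k i - 1 := by
  cases m with
  | zero => exact fun i => i.elim0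
  | succ m =>
    refine Fin.strictMono_iff_lt_succ.2 fun i => ?_
    have := hk.1 i.castSucc
    have := hk.2 i.castSucc i.succ (by simp)
    omega

theorem tsum_prod_pred_le (A : ℕ → ℝ≥0∞) (m : ℕ) :
    ∑' k : { k : Fin m → ℕ // FAdm m k }, ∏ i, A (k.1 i - 1) ≤ (∑' n, A n) ^ m / m ! := by
  let pred : { k : Fin m → ℕ // FAdm m k } → { k : Fin m → ℕ // StrictMono k } :=
    fun k => ⟨fun i => k.1 i - 1, k.2.strictMono_pred⟩
  have hinj : Function.Injective pred := by
    rintro ⟨k, hk⟩ ⟨l, hl⟩ h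
    refine Subtype.ext (funext fun i => show k i = l i from ?_)
    have hi : k i - 1 = l i - 1 := congrFun (congrArg Subtype.val h) i
    have := hk.1 i
    have := hl.1 i
    omega
  exact (ENNReal.tsum_comp_le_tsum_of_injective hinj fun k => ∏ i, A (k.1 i)).trans
    (ENNReal.tsum_strictMono_prod_le A m)

theorem nnnorm_neg_one_pow_mul_prod (x : ℕ → ℂ) (hk : FAdm m k) :
    ‖(-1 : ℂ) ^ m * ∏ i, x (k i) * x (k i + 1)‖₊ = ∏ i, ‖x (k i - 1 + 1) * x (k i - 1 + 2)‖₊ := by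
  rw [nnnorm_mul, nnnorm_pow, nnnorm_neg, nnnorm_one, one_pow, one_mul, nnnorm_prod]
  refine Finset.prod_congr rfl fun i _ => ?_
  have := hk.1 i
  rw [show k i - 1 + 1 = k i by omega, show k i - 1 + 2 = k i + 1 by omega]

end FAdm

/-- If `∑_{k≥1} |x_k x_{k+1}| < ∞`, the multiple series defining `𝔉(x)` converges
absolutely and `|𝔉(x)| ≤ exp (∑_{k≥1} |x_k x_{k+1}|)`. -/
theorem stmt_0 (x : ℕ → ℂ) (hx : Summable fun k : ℕ => ‖x (k + 1) * x (k + 2)‖) :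
    Summable (fun p : (Σ m : ℕ, { k : Fin m → ℕ // FAdm m k }) =>
      ‖(-1 : ℂ) ^ p.1 * ∏ i, x (p.2.1 i) * x (p.2.1 i + 1)‖) ∧
    ‖Fcal x‖ ≤ Real.exp (∑' k : ℕ, ‖x (k + 1) * x (k + 2)‖) := by
  set a : ℕ → ℝ≥0 := fun n => ‖x (n + 1) * x (n + 2)‖₊
  have ha : Summable a := NNReal.summable_coe.1 hx
  have hbound : ∑' p : (Σ m : ℕ, { k : Fin m → ℕ // FAdm m k }),
      (‖(-1 : ℂ) ^ p.1 * ∏ i, x (p.2.1 i) * x (p.2.1 i + 1)‖₊ : ℝ≥0∞)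
        ≤ ENNReal.ofReal (Real.exp (∑' n, a n : ℝ≥0)) :=
    calc _ = ∑' (m : ℕ) (k : { k : Fin m → ℕ // FAdm m k }), ∏ i, (a (k.1 i - 1) : ℝ≥0∞) := by
          rw [ENNReal.tsum_sigma']
          simp only [FAdm.nnnorm_neg_one_pow_mul_prod x (Subtype.prop _),
            ENNReal.ofNNReal_finsetProd, a]
      _ ≤ ∑' m : ℕ, (∑' n, (a n : ℝ≥0∞)) ^ m / m ! :=
          ENNReal.tsum_le_tsum fun m => FAdm.tsum_prod_pred_le _ m
      _ = _ := by rw [← ENNReal.coe_tsum ha, ENNReal.tsum_pow_div_factorial]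
  obtain ⟨hsum, hle⟩ := NNReal.summable_coe_and_tsum_le_of_tsum_le (Real.exp_pos _).le hbound
  refine ⟨hsum, (norm_tsum_le_tsum_norm hsum).trans ?_⟩
  simpa [a, NNReal.coe_tsum] using hle
end

section
/- For every x ∈ D and every k ≥ 1, 𝔉(x) = 𝔉(x_1,…,x_k)·𝔉(T^k x) − 𝔉(x_1,…,x_{k−1})·x_k x_{k+1}·𝔉(T^{k+1} x). -/
open scoped BigOperators

/-- 𝔉 of the finite sequence (x_1, …, x_n): x truncated after position n, padded by zeros. -/
noncomputable def FcalFin (n : ℕ) (x : ℕ → ℂ) : ℂ :=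
  Fcal fun k => if k ≤ n then x k else 0

/-- 𝔉 of the finite segment (x_a, …, x_b); it equals 1 when the segment is empty (b = a-1)
and, by convention, 0 when b = a-2 (a segment of "length -1"). -/
noncomputable def Fseg (x : ℕ → ℂ) (a b : ℕ) : ℂ :=
  if b + 1 < a then 0 else FcalFin (b + 1 - a) (fun j => x (j + a - 1))

/-! Splitting the admissible index tuples according to whether they begin with `1` gives the
first-step recurrence `𝔉(x) = 𝔉(Tx) - x₁x₂ 𝔉(T²x)`. The identity then follows by induction on `k`:
the recurrence `𝔉(x₁,…,x_{k+1}) = 𝔉(x₁,…,x_k) - x_k x_{k+1} 𝔉(x₁,…,x_{k-1})` needed in the step is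
the induction hypothesis itself, applied to `x` truncated after `k + 1`. -/

open Finset Function

abbrev AdmTuple : Type := Σ m : ℕ, { k : Fin m → ℕ // FAdm m k }

namespace FAdm

variable {m : ℕ} {k : Fin m → ℕ}

lemma add_two_mul_le (h : FAdm m k) (d : ℕ) :
    ∀ i j : Fin m, (i : ℕ) + d = j → k i + 2 * d ≤ k j := by
  induction d with
  | zero =>
    intro i j hij
    obtain rfl : i = j := Fin.ext (by omega)
    omega
  | succ d ih =>
    intro i j hij
    have hd : (i : ℕ) + d < m := by omega
    have := ih i ⟨i + d, hd⟩ rfl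
    have := h.2 ⟨i + d, hd⟩ j (by simp only; omega)
    omega

lemma two_mul_add_one_le (h : FAdm m k) (i : Fin m) : 2 * (i : ℕ) + 1 ≤ k i := by
  have := h.add_two_mul_le i ⟨0, i.pos⟩ i (by simp)
  have := h.1 ⟨0, i.pos⟩
  omega

lemma strictMono (h : FAdm m k) : StrictMono k := fun i j hij => by
  have := h.add_two_mul_le (j - i) i j (by omega)
  have : (i : ℕ) < j := hij
  omega

lemma add_const (h : FAdm m k) (c : ℕ) : FAdm m (fun i => k i + c) :=
  ⟨fun i => by dsimp only; have := h.1 i; omega,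
    fun i j hij => by dsimp only; have := h.2 i j hij; omega⟩

lemma sub_const (h : FAdm m k) {c : ℕ} (hc : ∀ i, c + 1 ≤ k i) : FAdm m (fun i => k i - c) :=
  ⟨fun i => by dsimp only; have := hc i; omega,
    fun i j hij => by dsimp only; have := h.2 i j hij; have := hc i; omega⟩

lemma tail {k : Fin (m + 1) → ℕ} (h : FAdm (m + 1) k) : FAdm m (fun i => k i.succ) :=
  ⟨fun i => h.1 i.succ, fun i j hij => h.2 i.succ j.succ (by simp [hij])⟩

lemma cons (h : FAdm m k) : FAdm (m + 1) (Fin.cons 1 (fun i => k i + 2)) := by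
  refine ⟨Fin.cases (by simp) (by simp), fun i j hij => ?_⟩
  induction j using Fin.cases with
  | zero => simp at hij
  | succ j =>
    induction i using Fin.cases with
    | zero => have := h.1 j; rw [Fin.cons_zero, Fin.cons_succ]; omega
    | succ i => have := h.2 i j (by simpa using hij); rw [Fin.cons_succ, Fin.cons_succ]; omega

end FAdm

namespace AdmTuple

lemma ext {m : ℕ} {k k' : Fin m → ℕ} {h : FAdm m k} {h' : FAdm m k'} (hkk : ∀ i, k i = k' i) :
    (⟨m, k, h⟩ : AdmTuple) = ⟨m, k', h'⟩ := by
  obtain rfl := funext hkk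
  rfl

def toFinset (p : AdmTuple) : Finset ℕ := univ.image p.2.1

lemma card_toFinset (p : AdmTuple) : #p.toFinset = p.1 := by
  rw [toFinset, card_image_of_injective _ p.2.2.strictMono.injective, card_univ, Fintype.card_fin]

lemma toFinset_injective : Injective toFinset := by
  rintro ⟨m, k, hk⟩ ⟨m', k', hk'⟩ h
  obtain rfl : m = m' := by simpa only [card_toFinset] using congrArg card h
  have hrange : Set.range k = Set.range k' := by
    simpa [toFinset, ← coe_inj] using h
  exact ext (congrFun ((hk.strictMono.range_inj hk'.strictMono).1 hrange))

def shift (p : AdmTuple) : AdmTuple := ⟨p.1, fun i => p.2.1 i + 1, p.2.2.add_const 1⟩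

def consOne (p : AdmTuple) : AdmTuple := ⟨p.1 + 1, Fin.cons 1 (fun i => p.2.1 i + 2), p.2.2.cons⟩

lemma shift_injective : Injective shift := by
  rintro ⟨m, k, hk⟩ ⟨m', k', hk'⟩ h
  obtain ⟨rfl, h⟩ := Sigma.mk.inj_iff.1 h
  exact ext fun i => by simpa using congrFun (Subtype.ext_iff.1 (eq_of_heq h)) i

lemma consOne_injective : Injective consOne := by
  rintro ⟨m, k, hk⟩ ⟨m', k', hk'⟩ h
  obtain ⟨hm, h⟩ := Sigma.mk.inj_iff.1 h
  obtain rfl : m = m' := Nat.succ_injective hm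
  exact ext fun i => by simpa using congrFun (Subtype.ext_iff.1 (eq_of_heq h)) i.succ

lemma shift_ne_consOne (p q : AdmTuple) : shift p ≠ consOne q := by
  intro h
  have hq : ∃ i, (consOne q).2.1 i = 1 := ⟨(0 : Fin (q.1 + 1)), rfl⟩
  obtain ⟨i, hi⟩ := h ▸ hq
  have := p.2.2.1 i
  simp only [shift] at hi
  omega

lemma exists_shift_eq {m : ℕ} {k : Fin m → ℕ} (hk : FAdm m k) (h1 : ∀ i, k i ≠ 1) :
    ∃ q, shift q = ⟨m, k, hk⟩ := by
  have h2 (i : Fin m) : 2 ≤ k i := by have := hk.1 i; have := h1 i; omega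
  exact ⟨⟨m, _, hk.sub_const h2⟩, ext fun i => by have := h2 i; show k i - 1 + 1 = k i; omega⟩

lemma exists_consOne_eq {m : ℕ} {k : Fin m → ℕ} (hk : FAdm m k) {i : Fin m} (hi : k i = 1) :
    ∃ q, consOne q = ⟨m, k, hk⟩ := by
  obtain ⟨m, rfl⟩ : ∃ m', m = m' + 1 := ⟨m - 1, by have := i.pos; omega⟩
  obtain rfl : i = 0 := Fin.ext (by have := hk.two_mul_add_one_le i; rw [Fin.val_zero]; omega)
  have h3 (i : Fin m) : 2 + 1 ≤ k i.succ := by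
    have := hk.two_mul_add_one_le i.succ
    rw [Fin.val_succ] at this
    omega
  refine ⟨⟨m, _, hk.tail.sub_const h3⟩, ext fun j => ?_⟩
  induction j using Fin.cases with
  | zero => exact hi.symm
  | succ j => have := h3 j; simp only [Fin.cons_succ]; omega

lemma bijective_sumElim_shift_consOne : Bijective (Sum.elim shift consOne) := by
  refine ⟨shift_injective.sumElim consOne_injective shift_ne_consOne, ?_⟩
  rintro ⟨m, k, hk⟩
  by_cases h1 : ∃ i, k i = 1
  · obtain ⟨q, hq⟩ := exists_consOne_eq hk h1.choose_spec
    exact ⟨.inr q, hq⟩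
  · obtain ⟨q, hq⟩ := exists_shift_eq hk fun i hi => h1 ⟨i, hi⟩
    exact ⟨.inl q, hq⟩

end AdmTuple

namespace Fcal

open AdmTuple

def term (y : ℕ → ℂ) (p : AdmTuple) : ℂ := (-1) ^ p.1 * ∏ i, y (p.2.1 i) * y (p.2.1 i + 1)

lemma eq_tsum_term (y : ℕ → ℂ) : Fcal y = ∑' p, term y p := rfl

lemma term_shift (y : ℕ → ℂ) (p : AdmTuple) : term y (shift p) = term (fun j => y (j + 1)) p :=
  rfl

lemma term_consOne (y : ℕ → ℂ) (p : AdmTuple) :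
    term y (consOne p) = -(y 1 * y 2) * term (fun j => y (j + 2)) p := by
  rw [term, term, consOne, Fin.prod_univ_succ]
  simp only [Fin.cons_zero, Fin.cons_succ, pow_succ, add_right_comm _ 2 1]
  ring

lemma summable_term (y : ℕ → ℂ) (hy : Summable fun j => ‖y (j + 1) * y (j + 2)‖) :
    Summable (term y) := by
  have ha : Summable fun j => ‖y j * y (j + 1)‖ := (summable_nat_add_iff 1).1 hy
  refine Summable.of_norm ?_
  have hnorm : (fun p => ‖term y p‖) = (fun s => ∏ j ∈ s, ‖y j * y (j + 1)‖) ∘ toFinset := by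
    funext p
    rw [comp_apply, toFinset, term, norm_mul, norm_prod, norm_pow, norm_neg, norm_one, one_pow,
      one_mul, prod_image fun i _ j _ h => p.2.2.strictMono.injective h]
  rw [hnorm]
  exact (summable_finsetProd_of_summable_nonneg (fun _ => norm_nonneg _) ha).comp_injective
    toFinset_injective

end Fcal

open AdmTuple Fcal in
lemma Fcal_eq_shift_sub (y : ℕ → ℂ) (hy : Summable fun j => ‖y (j + 1) * y (j + 2)‖) :
    Fcal y = Fcal (fun j => y (j + 1)) - y 1 * y 2 * Fcal (fun j => y (j + 2)) := by
  obtain ⟨e, he⟩ : ∃ e : AdmTuple ⊕ AdmTuple ≃ AdmTuple, ⇑e = Sum.elim shift consOne :=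
    ⟨.ofBijective _ bijective_sumElim_shift_consOne, rfl⟩
  have hs : Summable (term y ∘ e) := e.summable_iff.2 (summable_term y hy)
  rw [eq_tsum_term y, ← e.tsum_eq (term y),
    Summable.tsum_sum (f := fun c => term y (e c)) (hs.comp_injective Sum.inl_injective)
      (hs.comp_injective Sum.inr_injective)]
  simp only [he, Sum.elim_inl, Sum.elim_inr, term_shift, term_consOne, tsum_mul_left,
    eq_tsum_term]
  ring

lemma Fcal_eq_one_of_eq_zero {y : ℕ → ℂ} (hy : ∀ j, 2 ≤ j → y j = 0) : Fcal y = 1 := by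
  rw [Fcal.eq_tsum_term, tsum_eq_single ⟨0, Fin.elim0, fun i => i.elim0, fun i => i.elim0⟩]
  · simp [Fcal.term]
  rintro ⟨_ | m, k, hk⟩ hne
  · exact absurd (AdmTuple.ext fun i => i.elim0) hne
  · rw [Fcal.term, prod_eq_zero (mem_univ 0), mul_zero]
    show y (k 0) * y (k 0 + 1) = 0
    rw [hy (k 0 + 1) (by have := hk.1 0; omega), mul_zero]

lemma FcalFin_ite_of_le (x : ℕ → ℂ) {n c : ℕ} (hnc : n ≤ c) :
    FcalFin n (fun j => if j ≤ c then x j else 0) = FcalFin n x := by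
  simp only [FcalFin]
  congr 1
  funext j
  split_ifs <;> first | rfl | omega

lemma FcalFin_succ_of_forall_eq {k : ℕ}
    (h : ∀ y : ℕ → ℂ, (Summable fun j => ‖y (j + 1) * y (j + 2)‖) →
      Fcal y = FcalFin k y * Fcal (fun j => y (j + k))
        - FcalFin (k - 1) y * (y k * y (k + 1)) * Fcal (fun j => y (j + k + 1)))
    (x : ℕ → ℂ) : FcalFin (k + 1) x = FcalFin k x - FcalFin (k - 1) x * (x k * x (k + 1)) := by
  let z : ℕ → ℂ := fun j => if j ≤ k + 1 then x j else 0
  have hz : Summable fun j => ‖z (j + 1) * z (j + 2)‖ :=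
    summable_of_ne_finset_zero (s := range (k + 1)) fun j hj => by
      simp [z, show ¬ j + 1 ≤ k + 1 by simpa using hj]
  have hzk : Fcal (fun j => z (j + k)) = 1 :=
    Fcal_eq_one_of_eq_zero fun j hj => if_neg (by omega)
  have hzk1 : Fcal (fun j => z (j + k + 1)) = 1 :=
    Fcal_eq_one_of_eq_zero fun j hj => if_neg (by omega)
  have := h z hz
  rwa [hzk, hzk1, FcalFin_ite_of_le x le_self_add, FcalFin_ite_of_le x (by omega),
    show z k = x k from if_pos (by omega), show z (k + 1) = x (k + 1) from if_pos le_rfl,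
    mul_one, mul_one] at this

/-- For every x ∈ D and k ≥ 1:
𝔉(x) = 𝔉(x₁,…,x_k) 𝔉(Tᵏx) - 𝔉(x₁,…,x_{k-1}) x_k x_{k+1} 𝔉(T^{k+1}x). -/
theorem stmt_2 (x : ℕ → ℂ) (hx : Summable fun k : ℕ => ‖x (k + 1) * x (k + 2)‖)
    (k : ℕ) (hk : 1 ≤ k) :
    Fcal x = FcalFin k x * Fcal (fun j => x (j + k))
      - FcalFin (k - 1) x * (x k * x (k + 1)) * Fcal (fun j => x (j + k + 1)) := by
  induction k, hk using Nat.le_induction generalizing x with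
  | base =>
    have hFin (n : ℕ) (hn : n ≤ 1) : FcalFin n x = 1 :=
      Fcal_eq_one_of_eq_zero fun j hj => if_neg (by omega)
    rw [hFin 1 le_rfl, hFin 0 zero_le_one, Fcal_eq_shift_sub x hx]
    ring
  | succ k _ ih =>
    have hshift := Fcal_eq_shift_sub (fun j => x (j + k))
      (by simpa only [add_right_comm _ _ k] using (summable_nat_add_iff k).2 hx)
    rw [ih x hx, FcalFin_succ_of_forall_eq ih x, hshift, Nat.add_sub_cancel]
    simp only [add_assoc, add_comm 1 k, add_comm 2 k, one_add_one_eq_two]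
    ring
end

section
/- The Lommel polynomial R_{n,ν}(x) = ∑_{k=0}^{⌊n/2⌋} (−1)^k C(n−k,k) (Γ(ν+n−k)/Γ(ν+k)) (2/x)^{n−2k} satisfies the identity R_{n,ν}(x) = (2/x)^n (Γ(ν+n)/Γ(ν)) · 𝔉({x/(2(ν+k))}_{k=0}^{n−1}) for all n ≥ 0, ν ∈ ℂ with −ν ∉ ℤ_{≥0}, and x ≠ 0. -/
/-!
Both sides satisfy the three-term recurrence `R_{n+2} = (2/x)(ν+n+1) R_{n+1} - R_n` with the same
values at `n = 0, 1`. For the Lommel polynomial this is Pascal's rule and the absorption identity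
`(k+1) C(r,k+1) = (r-k) C(r,k)` for the coefficients, together with `Γ(s+1) = s Γ(s)`. For `𝔉` it is
the continuant recurrence `𝔉(x_1,…,x_{n+2}) = 𝔉(x_1,…,x_{n+1}) - x_{n+1} x_{n+2} 𝔉(x_1,…,x_n)`:
an admissible tuple using `x_{n+2}` must end with `k_m = n+1`, and deleting that last index is a
bijection onto the tuples using only `x_1,…,x_n`.
-/

open scoped BigOperators

/-- The classical Lommel polynomial
R_{n,ν}(x) = ∑_{k=0}^{⌊n/2⌋} (-1)^k C(n-k,k) (Γ(ν+n-k)/Γ(ν+k)) (2/x)^{n-2k}. -/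
noncomputable def lommelR (n : ℕ) (ν : ℂ) (x : ℂ) : ℂ :=
  ∑ k ∈ Finset.range (n / 2 + 1),
    (-1 : ℂ) ^ k * (Nat.choose (n - k) k : ℂ) *
      (Complex.Gamma (ν + (n : ℂ) - (k : ℂ)) / Complex.Gamma (ν + (k : ℂ))) *
      (2 / x) ^ (n - 2 * k)

open Finset Function

theorem FAdm.add_two_le_succ {m : ℕ} {k : Fin (m + 1) → ℕ} (h : FAdm (m + 1) k) (j : Fin m) :
    k j.castSucc + 2 ≤ k j.succ :=
  h.2 _ _ (by simp)

theorem FAdm.strictMono_s7 {m : ℕ} {k : Fin m → ℕ} (h : FAdm m k) : StrictMono k := by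
  cases m with
  | zero => exact fun i => i.elim0
  | succ m => exact Fin.strictMono_iff_lt_succ.2 fun j => by have := h.add_two_le_succ j; omega

theorem FAdm.snoc {m n : ℕ} {k : Fin m → ℕ} (h : FAdm m k) (hk : ∀ i, k i < n) :
    FAdm (m + 1) (Fin.snoc k (n + 1) : Fin (m + 1) → ℕ) := by
  refine ⟨Fin.lastCases (by simp) fun i => by simpa using h.1 i, fun i j hij => ?_⟩
  induction j using Fin.lastCases with
  | last =>
    induction i using Fin.lastCases with
    | last => simp at hij
    | cast i => simpa using Nat.succ_le_of_lt (hk i)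
  | cast j =>
    induction i using Fin.lastCases with
    | last => simp at hij; omega
    | cast i => simpa using h.2 i j (by simpa using hij)

namespace AdmTuple

/-- The term of `p` involves only `x_1, …, x_N`. -/
def Bounded (N : ℕ) (p : AdmTuple) : Prop := ∀ i, p.2.1 i < N

noncomputable def term (y : ℕ → ℂ) (p : AdmTuple) : ℂ :=
  (-1 : ℂ) ^ p.1 * ∏ i, y (p.2.1 i) * y (p.2.1 i + 1)

theorem length_le_of_bounded {N : ℕ} {p : AdmTuple} (hp : p.Bounded N) : p.1 ≤ N := by
  simpa using Fintype.card_le_of_injective (fun i => (⟨p.2.1 i, hp i⟩ : Fin N))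
    fun i j h => p.2.2.strictMono_s7.injective (congrArg Fin.val h)

theorem finite_setOf_bounded (N : ℕ) : {p : AdmTuple | p.Bounded N}.Finite := by
  let forget : AdmTuple → Σ m : ℕ, (Fin m → ℕ) := fun p => ⟨p.1, p.2.1⟩
  let embed : (Σ m : Fin (N + 1), (Fin m → Fin N)) → Σ m : ℕ, (Fin m → ℕ) :=
    fun c => ⟨c.1, fun i => c.2 i⟩
  have forget_injective : forget.Injective := by
    rintro ⟨m, k, hk⟩ ⟨m', k', hk'⟩ h
    cases h
    rfl
  refine ((Set.finite_range embed).preimage forget_injective.injOn).subset ?_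
  rintro ⟨m, k, hk⟩ hp
  exact ⟨⟨⟨m, Nat.lt_succ_of_le (length_le_of_bounded hp)⟩, fun i => ⟨k i, hp i⟩⟩, rfl⟩

section Term

variable {N : ℕ} {y : ℕ → ℂ}

theorem term_eq_zero (hy : ∀ j, N < j → y j = 0) {p : AdmTuple} (hp : ¬ p.Bounded N) :
    term y p = 0 := by
  obtain ⟨i, hi⟩ := not_forall.1 hp
  exact mul_eq_zero_of_right _ <|
    prod_eq_zero (mem_univ i) (by rw [hy (p.2.1 i + 1) (by omega), mul_zero])

theorem support_term_subset (hy : ∀ j, N < j → y j = 0) :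
    support (term y) ⊆ {p | p.Bounded N} :=
  fun _ hp => not_not.1 (mt (term_eq_zero hy) hp)

theorem summable_term (hy : ∀ j, N < j → y j = 0) : Summable (term y) :=
  summable_of_hasFiniteSupport ((finite_setOf_bounded N).subset (support_term_subset hy))

theorem term_congr {y' : ℕ → ℂ} {p : AdmTuple} (hp : p.Bounded N)
    (h : ∀ j ≤ N, y j = y' j) : term y p = term y' p := by
  unfold term
  congr 1
  exact prod_congr rfl fun i _ => by rw [h _ (hp i).le, h _ (hp i)]

end Term

noncomputable def snoc (q : AdmTuple) (n : ℕ) (hq : q.Bounded n) : AdmTuple :=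
  ⟨q.1 + 1, Fin.snoc q.2.1 (n + 1), q.2.2.snoc hq⟩

section Snoc

variable {n : ℕ} {q q' : AdmTuple} {hq : q.Bounded n} {hq' : q'.Bounded n}

theorem snoc_injective (h : q.snoc n hq = q'.snoc n hq') : q = q' := by
  obtain ⟨m, k, hk⟩ := q
  obtain ⟨m', k', hk'⟩ := q'
  obtain ⟨hm, hkk⟩ := Sigma.mk.inj_iff.1 h
  obtain rfl : m = m' := Nat.succ.inj hm
  have hsnoc : (Fin.snoc k (n + 1) : Fin (m + 1) → ℕ) = Fin.snoc k' (n + 1) :=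
    congrArg Subtype.val (eq_of_heq hkk)
  obtain rfl : k = k' := by simpa using congrArg Fin.init hsnoc
  rfl

theorem not_bounded_snoc : ¬ (q.snoc n hq).Bounded (n + 1) :=
  fun h => by simpa [snoc] using h (Fin.last _)

theorem term_snoc (y : ℕ → ℂ) :
    term y (q.snoc n hq) = -(y (n + 1) * y (n + 2)) * term y q := by
  obtain ⟨m, k, hk⟩ := q
  dsimp only [term, snoc]
  rw [Fin.prod_univ_castSucc]
  simp only [Fin.snoc_castSucc, Fin.snoc_last, pow_succ]
  ring

theorem exists_eq_snoc {p : AdmTuple} (h2 : p.Bounded (n + 2)) (h1 : ¬ p.Bounded (n + 1)) :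
    ∃ (q : AdmTuple) (hq : q.Bounded n), p = q.snoc n hq := by
  obtain ⟨_ | m, k, hk⟩ := p
  · exact absurd nofun h1
  obtain ⟨i, hi⟩ := not_forall.1 h1
  have hlast : k (Fin.last m) = n + 1 := by
    have := hk.strictMono_s7.monotone (Fin.le_last i)
    have := h2 (Fin.last m)
    simp only at hi this ⊢
    omega
  have hinit : ∀ j : Fin m, Fin.init k j < n := fun j => by
    have := hk.add_two_le_succ j
    have := hk.strictMono_s7.monotone (Fin.le_last j.succ)
    simp only [Fin.init]
    omega
  refine ⟨⟨m, Fin.init k, fun i => hk.1 _, fun i j hij => hk.2 _ _ (by simpa using hij)⟩,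
    hinit, ?_⟩
  simp only [snoc, ← hlast, Fin.snoc_init_self]

end Snoc

theorem tsum_term_not_bounded {n : ℕ} {y : ℕ → ℂ} (hy : ∀ j, n + 2 < j → y j = 0) :
    ∑' p : ↑{p : AdmTuple | p.Bounded (n + 1)}ᶜ, term y p
      = -(y (n + 1) * y (n + 2)) * ∑' q : {q : AdmTuple | q.Bounded n}, term y q := by
  let f : {q : AdmTuple | q.Bounded n} → ↑{p : AdmTuple | p.Bounded (n + 1)}ᶜ :=
    fun q => ⟨q.1.snoc n q.2, not_bounded_snoc⟩
  have hf : f.Injective := fun q q' h =>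
    Subtype.ext (snoc_injective (hq := q.2) (hq' := q'.2) (congrArg Subtype.val h))
  have hcover : support (fun p : ↑{p : AdmTuple | p.Bounded (n + 1)}ᶜ => term y p)
      ⊆ Set.range f := by
    rintro ⟨p, hp⟩ hne
    obtain ⟨q, hq, rfl⟩ := exists_eq_snoc (not_not.1 (mt (term_eq_zero hy) hne)) hp
    exact ⟨⟨q, hq⟩, rfl⟩
  rw [← hf.tsum_eq hcover, ← tsum_mul_left]
  exact tsum_congr fun q => term_snoc (hq := q.2) y

end AdmTuple

open AdmTuple

theorem Fcal_eq_tsum_term (y : ℕ → ℂ) : Fcal y = ∑' p, term y p := rfl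

theorem FcalFin_eq_tsum_bounded {N N' : ℕ} (hN : N ≤ N') (x : ℕ → ℂ) :
    FcalFin N x = ∑' p : {p : AdmTuple | p.Bounded N},
      term (fun k => if k ≤ N' then x k else 0) p := by
  rw [FcalFin, Fcal_eq_tsum_term, ← tsum_subtype_eq_of_support_subset
    (support_term_subset (N := N) fun j hj => if_neg (by omega))]
  refine tsum_congr fun p => term_congr p.2 fun j hj => ?_
  simp only [if_pos hj, if_pos (hj.trans hN)]

theorem FcalFin_add_two (n : ℕ) (x : ℕ → ℂ) :
    FcalFin (n + 2) x = FcalFin (n + 1) x - x (n + 1) * x (n + 2) * FcalFin n x := by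
  set y : ℕ → ℂ := fun k => if k ≤ n + 2 then x k else 0
  have hy : ∀ j, n + 2 < j → y j = 0 := fun j hj => if_neg (by omega)
  have hsum := summable_term hy
  have hFcal : FcalFin (n + 2) x = ∑' p, term y p := rfl
  rw [hFcal,
    ← Summable.tsum_add_tsum_compl (s := {p : AdmTuple | p.Bounded (n + 1)}) (hsum.subtype _)
      (hsum.subtype _),
    ← FcalFin_eq_tsum_bounded (by omega), tsum_term_not_bounded hy,
    ← FcalFin_eq_tsum_bounded (by omega)]
  simp only [y, if_pos (by omega : n + 1 ≤ n + 2), if_pos le_rfl]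
  ring

theorem FcalFin_of_le_one {N : ℕ} (hN : N ≤ 1) (x : ℕ → ℂ) : FcalFin N x = 1 := by
  have hy : ∀ j, 1 < j → (if j ≤ N then x j else 0) = 0 := fun j hj => if_neg (by omega)
  rw [FcalFin, Fcal_eq_tsum_term, tsum_eq_single ⟨0, Fin.elim0, nofun, nofun⟩]
  · simp [term]
  · rintro ⟨_ | m, k, hk⟩ hp
    · exact (hp (Sigma.ext rfl (heq_of_eq (Subsingleton.elim _ _)))).elim
    · exact term_eq_zero hy fun hb => (hb 0).not_ge (hk.1 0)

noncomputable def lommelCoeff (ν : ℂ) (n k : ℕ) : ℂ :=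
  (-1 : ℂ) ^ k * (Nat.choose (n - k) k : ℂ) *
    (Complex.Gamma (ν + (n : ℂ) - (k : ℂ)) / Complex.Gamma (ν + (k : ℂ)))

section Lommel

variable {ν : ℂ}

theorem add_natCast_ne_zero (hν : ∀ m : ℕ, ν ≠ -(m : ℂ)) (m : ℕ) : ν + m ≠ 0 :=
  fun h => hν m (eq_neg_of_add_eq_zero_left h)

theorem Gamma_add_natCast_succ (hν : ∀ m : ℕ, ν ≠ -(m : ℂ)) (m : ℕ) :
    Complex.Gamma (ν + (m + 1 : ℕ)) = (ν + m) * Complex.Gamma (ν + m) := by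
  rw [← Complex.Gamma_add_one _ (add_natCast_ne_zero hν m)]
  push_cast
  ring_nf

theorem lommelCoeff_eq_zero {n k : ℕ} (h : n < 2 * k) : lommelCoeff ν n k = 0 := by
  simp [lommelCoeff, Nat.choose_eq_zero_of_lt (by omega : n - k < k)]

theorem lommelR_eq_sum_range {n M : ℕ} (hM : n / 2 < M) (x : ℂ) :
    lommelR n ν x = ∑ k ∈ range M, lommelCoeff ν n k * (2 / x) ^ (n - 2 * k) := by
  refine sum_subset (range_subset_range.2 hM) fun k _ hk => ?_
  rw [mem_range] at hk
  rw [← lommelCoeff, lommelCoeff_eq_zero (by omega : n < 2 * k), zero_mul]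

theorem lommelCoeff_add_two_succ (hν : ∀ m : ℕ, ν ≠ -(m : ℂ)) (n k : ℕ) :
    lommelCoeff ν (n + 2) (k + 1)
      = (ν + n + 1) * lommelCoeff ν (n + 1) (k + 1) - lommelCoeff ν n k := by
  rcases lt_or_ge n (2 * k) with h | h
  · rw [lommelCoeff_eq_zero h, lommelCoeff_eq_zero (by omega), lommelCoeff_eq_zero (by omega)]
    ring
  obtain ⟨r, rfl⟩ : ∃ r, n = k + r := ⟨n - k, by omega⟩
  have pascal : ((r + 1).choose (k + 1) : ℂ) = r.choose k + r.choose (k + 1) := by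
    exact_mod_cast Nat.choose_succ_succ' r k
  have absorption : (r.choose (k + 1) : ℂ) * (k + 1) = r.choose k * (r - k) := by
    have := Nat.choose_succ_right_eq r k
    rw [← Nat.cast_sub (by omega)]
    exact_mod_cast this
  have hk := add_natCast_ne_zero hν k
  have gamma_top : Complex.Gamma (ν + ((k + r + 2 : ℕ) : ℂ) - ((k + 1 : ℕ) : ℂ))
      = (ν + r) * Complex.Gamma (ν + r) := by
    rw [← Gamma_add_natCast_succ hν]; congr 1; push_cast; ring
  have gamma_mid : Complex.Gamma (ν + ((k + r + 1 : ℕ) : ℂ) - ((k + 1 : ℕ) : ℂ))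
      = Complex.Gamma (ν + r) := by
    congr 1; push_cast; ring
  have gamma_bot : Complex.Gamma (ν + ((k + r : ℕ) : ℂ) - (k : ℂ)) = Complex.Gamma (ν + r) := by
    congr 1; push_cast; ring
  simp only [lommelCoeff, show k + r + 2 - (k + 1) = r + 1 by omega,
    show k + r + 1 - (k + 1) = r by omega, Nat.add_sub_cancel_left, gamma_top, gamma_mid,
    gamma_bot, Gamma_add_natCast_succ hν, pascal]
  push_cast
  set w := Complex.Gamma (ν + r) / ((ν + k) * Complex.Gamma (ν + k))
  have hw : Complex.Gamma (ν + r) / Complex.Gamma (ν + k) = (ν + k) * w := by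
    rw [mul_div_assoc', mul_div_mul_left _ _ hk]
  rw [mul_div_assoc, hw]
  linear_combination (-(-1 : ℂ) ^ (k + 1) * w) * absorption

theorem lommelCoeff_mul_pow_succ_sub (u : ℂ) (n k : ℕ) :
    lommelCoeff ν n k * u ^ (n + 1 - 2 * k) = u * (lommelCoeff ν n k * u ^ (n - 2 * k)) := by
  rcases lt_or_ge n (2 * k) with h | h
  · simp [lommelCoeff_eq_zero h]
  · rw [show n + 1 - 2 * k = n - 2 * k + 1 by omega, pow_succ]
    ring

theorem lommelCoeff_zero_right (n : ℕ) :
    lommelCoeff ν n 0 = Complex.Gamma (ν + n) / Complex.Gamma ν := by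
  simp [lommelCoeff]

theorem lommelR_add_two (hν : ∀ m : ℕ, ν ≠ -(m : ℂ)) (n : ℕ) (x : ℂ) :
    lommelR (n + 2) ν x = 2 / x * (ν + n + 1) * lommelR (n + 1) ν x - lommelR n ν x := by
  set u := 2 / x
  have hterm : ∀ k, lommelCoeff ν (n + 2) (k + 1) * u ^ (n + 2 - 2 * (k + 1))
      = u * (ν + n + 1) * (lommelCoeff ν (n + 1) (k + 1) * u ^ (n + 1 - 2 * (k + 1)))
        - lommelCoeff ν n k * u ^ (n - 2 * k) := fun k => by
    have h := lommelCoeff_mul_pow_succ_sub (ν := ν) u (n + 1) (k + 1)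
    rw [show n + 1 + 1 - 2 * (k + 1) = n - 2 * k by omega] at h
    rw [lommelCoeff_add_two_succ hν, show n + 2 - 2 * (k + 1) = n - 2 * k by omega]
    linear_combination (ν + n + 1) * h
  have hzero : lommelCoeff ν (n + 2) 0 * u ^ (n + 2 - 2 * 0)
      = u * (ν + n + 1) * (lommelCoeff ν (n + 1) 0 * u ^ (n + 1 - 2 * 0)) := by
    rw [lommelCoeff_zero_right, lommelCoeff_zero_right, Nat.cast_add_one, ← add_assoc,
      Complex.Gamma_add_one _ (by exact_mod_cast add_natCast_ne_zero hν (n + 1)),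
      show n + 2 - 2 * 0 = n + 1 - 2 * 0 + 1 by omega, pow_succ]
    push_cast
    ring
  rw [lommelR_eq_sum_range (M := n + 2) (by omega), sum_range_succ',
    sum_congr rfl fun k _ => hterm k, sum_sub_distrib, ← mul_sum, hzero,
    lommelR_eq_sum_range (M := n + 2) (by omega), lommelR_eq_sum_range (M := n + 1) (by omega),
    sum_range_succ' _ (n + 1)]
  ring

noncomputable def lommelFcal (n : ℕ) (ν x : ℂ) : ℂ :=
  (2 / x) ^ n * (Complex.Gamma (ν + n) / Complex.Gamma ν) *
    FcalFin n (fun j => x / (2 * (ν + (j : ℂ) - 1)))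

theorem lommelFcal_add_two (hν : ∀ m : ℕ, ν ≠ -(m : ℂ)) {x : ℂ} (hx : x ≠ 0) (n : ℕ) :
    lommelFcal (n + 2) ν x = 2 / x * (ν + n + 1) * lommelFcal (n + 1) ν x - lommelFcal n ν x := by
  have h0 := add_natCast_ne_zero hν n
  have h1 : ν + n + 1 ≠ 0 := by
    simpa only [Nat.cast_add_one, add_assoc] using add_natCast_ne_zero hν (n + 1)
  have shift1 : ν + ((n + 1 : ℕ) : ℂ) - 1 = ν + n := by push_cast; ring
  have shift2 : ν + ((n + 2 : ℕ) : ℂ) - 1 = ν + n + 1 := by push_cast; ring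
  have gamma2 :
      Complex.Gamma (ν + (n + 2 : ℕ)) = (ν + n + 1) * (ν + n) * Complex.Gamma (ν + n) := by
    rw [show ((n + 2 : ℕ) : ℂ) = ((n + 1 : ℕ) : ℂ) + 1 by push_cast; ring, ← add_assoc,
      Complex.Gamma_add_one _ (by exact_mod_cast add_natCast_ne_zero hν (n + 1)),
      Gamma_add_natCast_succ hν]
    push_cast
    ring
  simp only [lommelFcal, FcalFin_add_two, shift1, shift2, gamma2, Gamma_add_natCast_succ hν]
  generalize FcalFin (n + 1) _ = F₁
  generalize FcalFin n _ = F₀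
  have hprod :
      (ν + n + 1) * (ν + n) * (x / (2 * (ν + n)) * (x / (2 * (ν + n + 1)))) = x ^ 2 / 4 := by
    field_simp
    norm_num
  have hsq : (2 / x) ^ 2 * (x ^ 2 / 4) = 1 := by
    field_simp
    norm_num
  linear_combination (-(2 / x) ^ (n + 2) * (Complex.Gamma (ν + n) / Complex.Gamma ν) * F₀) * hprod
    - (2 / x) ^ n * (Complex.Gamma (ν + n) / Complex.Gamma ν) * F₀ * hsq

end Lommel

/-- R_{n,ν}(x) = (2/x)^n (Γ(ν+n)/Γ(ν)) 𝔉({x/(2(ν+k))}_{k=0}^{n-1}). -/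
theorem stmt_7 (n : ℕ) (ν : ℂ) (hν : ∀ m : ℕ, ν ≠ -(m : ℂ)) (x : ℂ) (hx : x ≠ 0) :
    lommelR n ν x = (2 / x) ^ n * (Complex.Gamma (ν + n) / Complex.Gamma ν) *
      FcalFin n (fun j => x / (2 * (ν + (j : ℂ) - 1))) := by
  change lommelR n ν x = lommelFcal n ν x
  induction n using Nat.twoStepInduction with
  | zero => simp [lommelR, lommelFcal, FcalFin_of_le_one]
  | one =>
    simp [lommelR, lommelFcal, FcalFin_of_le_one]
    ring
  | more n ih0 ih1 => rw [lommelR_add_two hν, lommelFcal_add_two hν hx, ih0, ih1]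
end
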